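/- Let θ be as in the leaper setting and φ = (rθ + m)/n in reduced form. If L(θ, φ) = 0, then L(θ, gφ) = 0 for every integer g that is not a multiple of n. -/

import Mathlib

/-- Distance from a real number to the nearest integer. -/
noncomputable def distNearestInt (x : ℝ) : ℝ := |x - round x|

/-- The inhomogeneous approximation constant. -/
noncomputable def Lconst (θ φ : ℝ) : ℝ :=
  Filter.liminf (fun q : ℤ => |(q : ℝ)| * distNearestInt (q * θ - φ)) Filter.cofinite

/-!
Since `‖g x‖ ≤ |g| ‖x‖`, the term at `gq` of the sequence defining `L(θ, gφ)` is at most `g²`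
times the term at `q` of the one defining `L(θ, φ)`, so `L(θ, gφ) ≤ g² L(θ, φ)` for `g ≠ 0`.
The liminf over `ℤ` is a junk `0` when the sequence tends to infinity; for irrational `θ` this is
ruled out by the inhomogeneous bound `|q| ‖qθ - ψ‖ ≤ 5` for infinitely many `q`, which comes from
Dirichlet approximations `P/Q` in lowest terms with `Q` arbitrarily large.
-/

lemma distNearestInt_nonneg (x : ℝ) : 0 ≤ distNearestInt x := abs_nonneg _

lemma distNearestInt_le (x : ℝ) (z : ℤ) : distNearestInt x ≤ |x - z| := round_le x z

lemma distNearestInt_intCast_mul_le (g : ℤ) (x : ℝ) :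
    distNearestInt (g * x) ≤ |(g : ℝ)| * distNearestInt x := by
  calc distNearestInt (g * x) ≤ |g * x - ((g * round x : ℤ) : ℝ)| := distNearestInt_le _ _
    _ = |(g : ℝ)| * distNearestInt x := by
      rw [distNearestInt, ← abs_mul]
      push_cast
      ring_nf

lemma exists_mul_eq_add_mul_of_isCoprime {P Q : ℤ} (hcop : IsCoprime P Q) (hQ : 0 < Q) (c : ℤ) :
    ∃ t k : ℤ, 0 ≤ t ∧ t < Q ∧ t * P = c + Q * k := by
  obtain ⟨u, v, huv⟩ := hcop
  refine ⟨c * u % Q, -(c * u / Q) * P - c * v, Int.emod_nonneg _ hQ.ne',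
    Int.emod_lt_of_pos _ hQ, ?_⟩
  rw [Int.emod_def]
  linear_combination c * huv

/-- Take `j = Q + t` with `0 ≤ t < Q`: modulo `1`, `jθ` lies within `j|Qθ - P|/Q` of `tP/Q`, and
coprimality lets `tP` hit the residue of `round (Qψ)` modulo `Q`. -/
lemma exists_abs_mul_distNearestInt_le_five (θ ψ : ℝ) {P Q : ℤ} (hcop : IsCoprime P Q)
    (hQ : 0 < Q) (happrox : |Q * θ - P| ≤ 1 / Q) :
    ∃ j : ℤ, Q ≤ j ∧ |(j : ℝ)| * distNearestInt (j * θ - ψ) ≤ 5 := by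
  obtain ⟨t, k, ht0, htQ, htk⟩ := exists_mul_eq_add_mul_of_isCoprime hcop hQ (round (Q * ψ))
  refine ⟨Q + t, by omega, ?_⟩
  set j := Q + t
  have hQR : (0 : ℝ) < Q := by exact_mod_cast hQ
  have hj0 : (0 : ℝ) < j := by exact_mod_cast (show 0 < j by omega)
  have hjQ : (j : ℝ) ≤ 2 * Q := by exact_mod_cast (show j ≤ 2 * Q by omega)
  have key : (Q : ℝ) * (j * θ - ψ - ((P + k : ℤ) : ℝ))
      = j * (Q * θ - P) + (round (Q * ψ) - Q * ψ) := by
    have htkR : (t : ℝ) * P = round (Q * ψ) + Q * k := by exact_mod_cast htk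
    simp only [j]
    push_cast
    linear_combination htkR
  have hdist : Q * distNearestInt (j * θ - ψ) ≤ j / Q + 1 / 2 :=
    calc Q * distNearestInt (j * θ - ψ) ≤ Q * |j * θ - ψ - ((P + k : ℤ) : ℝ)| := by
          gcongr; exact distNearestInt_le _ _
      _ = |j * (Q * θ - P) + (round (Q * ψ) - Q * ψ)| := by rw [← key, abs_mul, abs_of_pos hQR]
      _ ≤ j * |Q * θ - P| + 1 / 2 := by
          refine (abs_add_le _ _).trans (add_le_add ?_ ?_)
          · rw [abs_mul, abs_of_pos hj0]
          · rw [abs_sub_comm]; exact abs_sub_round _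
      _ ≤ j / Q + 1 / 2 := by
          have := mul_le_mul_of_nonneg_left happrox hj0.le
          rw [mul_one_div] at this
          linarith
  have hjQ' : (j : ℝ) / Q ≤ 2 := by rw [div_le_iff₀ hQR]; linarith
  rw [abs_of_pos hj0]
  nlinarith [mul_le_mul_of_nonneg_right hjQ (distNearestInt_nonneg (j * θ - ψ))]

lemma exists_rat_den_gt_abs_sub_le_of_irrational {ξ : ℝ} (hξ : Irrational ξ) (B : ℕ) :
    ∃ q : ℚ, B < q.den ∧ |q.den * ξ - q.num| ≤ 1 / q.den := by
  have hpos : ∀ d ∈ Finset.Icc 1 B, 0 < distNearestInt (d * ξ) := fun d hd =>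
    abs_pos.2 (sub_ne_zero.2 ((hξ.natCast_mul (by simp at hd; omega)).ne_int _))
  -- With `1/(n+1) < ‖dξ‖` for all `d ≤ B`, Dirichlet's approximation of order `n` has `den > B`.
  obtain ⟨n, hn0, hn⟩ := ((Filter.eventually_gt_atTop 0).and ((Filter.eventually_all_finset _).2
    fun d hd => tendsto_one_div_add_atTop_nhds_zero_nat.eventually (gt_mem_nhds (hpos d hd)))).exists
  obtain ⟨q, hq, hden⟩ := Real.exists_rat_abs_sub_le_and_den_le ξ hn0
  have hd0 : (0 : ℝ) < q.den := by exact_mod_cast q.pos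
  have happrox : |q.den * ξ - q.num| ≤ 1 / (n + 1) := by
    have : (q.den : ℝ) * ξ - q.num = q.den * (ξ - q) := by
      rw [Rat.cast_def]; field_simp
    rw [this, abs_mul, abs_of_pos hd0, ← le_div_iff₀' hd0, div_div]
    simpa only [mul_comm] using hq
  refine ⟨q, ?_, happrox.trans ?_⟩
  · by_contra! hle
    have := hn q.den (Finset.mem_Icc.2 ⟨q.pos, hle⟩)
    linarith [distNearestInt_le (q.den * ξ) q.num]
  · gcongr
    exact le_add_of_le_of_nonneg (by exact_mod_cast hden) zero_le_one

lemma frequently_abs_mul_distNearestInt_le_five {θ : ℝ} (hθ : Irrational θ) (ψ : ℝ) :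
    ∃ᶠ q : ℤ in Filter.cofinite, |(q : ℝ)| * distNearestInt (q * θ - ψ) ≤ 5 := by
  rw [Filter.frequently_cofinite_iff_infinite]
  refine Set.infinite_of_not_bddAbove fun ⟨M, hM⟩ => ?_
  obtain ⟨q, hMq, hq⟩ := exists_rat_den_gt_abs_sub_le_of_irrational hθ M.toNat
  obtain ⟨j, hqj, hj⟩ := exists_abs_mul_distNearestInt_le_five θ ψ (Rat.isCoprime_num_den q)
    (by exact_mod_cast q.pos) (by simpa only [Int.cast_natCast, sub_eq_add_neg] using hq)
  have := hM hj
  omega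

lemma Lconst_nonneg {θ : ℝ} (hθ : Irrational θ) (φ : ℝ) : 0 ≤ Lconst θ φ :=
  Filter.le_liminf_of_le (.of_frequently_le (frequently_abs_mul_distNearestInt_le_five hθ φ))
    (Filter.Eventually.of_forall fun _ => mul_nonneg (abs_nonneg _) (distNearestInt_nonneg _))

lemma abs_mul_distNearestInt_intCast_mul_le (θ φ : ℝ) (g q : ℤ) :
    |((g * q : ℤ) : ℝ)| * distNearestInt ((g * q : ℤ) * θ - g * φ)
      ≤ g ^ 2 * (|(q : ℝ)| * distNearestInt (q * θ - φ)) := by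
  calc |((g * q : ℤ) : ℝ)| * distNearestInt ((g * q : ℤ) * θ - g * φ)
      = |(g : ℝ)| * |(q : ℝ)| * distNearestInt (g * (q * θ - φ)) := by
        push_cast; rw [abs_mul]; ring_nf
    _ ≤ |(g : ℝ)| * |(q : ℝ)| * (|(g : ℝ)| * distNearestInt (q * θ - φ)) := by
        gcongr; exact distNearestInt_intCast_mul_le g _
    _ = g ^ 2 * (|(q : ℝ)| * distNearestInt (q * θ - φ)) := by rw [← sq_abs (g : ℝ)]; ring

lemma Lconst_intCast_mul_le {θ : ℝ} (hθ : Irrational θ) (φ : ℝ) {g : ℤ} (hg : g ≠ 0) :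
    Lconst θ (g * φ) ≤ g ^ 2 * Lconst θ φ := by
  have hg2 : (0 : ℝ) < g ^ 2 := by positivity
  refine le_of_forall_gt_imp_ge_of_dense fun ε hε => ?_
  have hsmall : ∃ᶠ q : ℤ in Filter.cofinite,
      |(q : ℝ)| * distNearestInt (q * θ - φ) < ε / g ^ 2 :=
    Filter.frequently_lt_of_liminf_lt
      (.of_frequently_le (frequently_abs_mul_distNearestInt_le_five hθ φ))
      ((lt_div_iff₀' hg2).2 hε)
  refine Filter.liminf_le_of_frequently_le ?_
    (Filter.isBoundedUnder_of ⟨0, fun _ => mul_nonneg (abs_nonneg _) (distNearestInt_nonneg _)⟩)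
  refine (mul_right_injective₀ hg).tendsto_cofinite.frequently (hsmall.mono fun q hq => ?_)
  calc _ ≤ g ^ 2 * (|(q : ℝ)| * distNearestInt (q * θ - φ)) :=
        abs_mul_distNearestInt_intCast_mul_le θ φ g q
    _ ≤ ε := by rw [lt_div_iff₀' hg2] at hq; exact hq.le

theorem Lconst_eq_zero_mul_general (θ : ℝ) (hθ : Irrational θ) (n : ℕ) (φ : ℝ)
    (hzero : Lconst θ φ = 0) :
    ∀ g : ℤ, ¬ ((n : ℤ) ∣ g) → Lconst θ (g * φ) = 0 := by
  intro g hg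
  have hg0 : g ≠ 0 := fun h => hg (h ▸ dvd_zero _)
  refine le_antisymm ?_ (Lconst_nonneg hθ _)
  simpa [hzero] using Lconst_intCast_mul_le hθ φ hg0

/-- Corollary: in the leaper setting, for `φ = (rθ+m)/n` in reduced form, if
`L(θ, φ) = 0` then `L(θ, g·φ) = 0` for every integer `g` not a multiple of `n`. -/
theorem Lconst_eq_zero_mul
    (θ : ℝ) (hθ : Irrational θ)
    (b : ℕ → ℤ) (hb : ∀ i : ℕ, 1 ≤ i → 1 ≤ b i)
    (p q : ℤ → ℤ)
    (hpm1 : p (-1) = 1) (hqm1 : q (-1) = 0)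
    (hp0 : p 0 = b 0) (hq0 : q 0 = 1)
    (hprec : ∀ i : ℕ, p ((i : ℤ) + 1) = b (i + 1) * p i + p ((i : ℤ) - 1))
    (hqrec : ∀ i : ℕ, q ((i : ℤ) + 1) = b (i + 1) * q i + q ((i : ℤ) - 1))
    (hconv : Filter.Tendsto (fun i : ℕ => (p i : ℝ) / (q i : ℝ)) Filter.atTop (nhds θ))
    -- leaping subscripts
    (I : ℕ → ℕ) (hI : StrictMono I)
    (ha : Filter.Tendsto (fun j : ℕ => b (I j + 1)) Filter.atTop Filter.atTop)
    (hbdd : ∃ C : ℤ, ∀ i : ℕ, 1 ≤ i → (∀ j : ℕ, i ≠ I j + 1) → b i ≤ C)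
    -- φ = (rθ + m)/n in reduced form
    (n : ℕ) (hn : 2 ≤ n) (r m : ℤ)
    (hr : 0 ≤ r ∧ r < n) (hm : 0 ≤ m ∧ m < n)
    (hgcd : Int.gcd r (Int.gcd m n) = 1)
    (φ : ℝ) (hφ : φ = (r * θ + m) / n)
    (hzero : Lconst θ φ = 0) :
    ∀ g : ℤ, ¬ ((n : ℤ) ∣ g) → Lconst θ (g * φ) = 0 :=
  Lconst_eq_zero_mul_general θ hθ n φ hzero
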